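/- arXiv:2202.05088 — 2 statements merged into one kernel-verified Lean document; each statement's English description precedes it below -/
import Mathlib

section
/- Let G be the multiplication table of the group (ℤ/2ℤ)^k, viewed as a Latin square of order n = 2^k via L x y = x + y. Then the number of intercalates of L (unordered pairs of rows {i,j} with i ≠ j and unordered pairs of columns {x,y} with x ≠ y such that L i x = L j y and L i y = L j x) is exactly n^2(n-1)/4. -/
/-! In an elementary abelian 2-group `V` of order `n`, both defining equations of an intercalate
say `i + j = x + y`, so intercalates are the pairs of unordered pairs `{i, j}`, `{x, y}` with the
same nonzero sum `d`. For each `d ≠ 0`, the unordered pairs with sum `d` are the `n / 2` pairs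
`{i, i + d}`, hence there are `(n - 1) (n / 2)²` intercalates. -/

open Finset

lemma card_filter_fiberProduct {α β : Type*} [Fintype α] [Fintype β] [DecidableEq β]
    (f : α → β) (P : β → Prop) [DecidablePred P] :
    #{pq : α × α | f pq.1 = f pq.2 ∧ P (f pq.1)} = ∑ d with P d, #{a | f a = d} ^ 2 := by
  have hmaps : ∀ pq ∈ ({pq : α × α | f pq.1 = f pq.2 ∧ P (f pq.1)} : Finset _),
      f pq.1 ∈ ({d | P d} : Finset β) := fun _ hpq => by simpa using (mem_filter.1 hpq).2.2
  rw [card_eq_sum_card_fiberwise hmaps]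
  refine sum_congr rfl fun d hd => ?_
  rw [sq, ← card_product]
  congr 1
  ext ⟨a, b⟩
  simp only [mem_filter, mem_univ, true_and, mem_product] at hd ⊢
  constructor
  · rintro ⟨⟨hab, -⟩, rfl⟩
    exact ⟨rfl, hab.symm⟩
  · rintro ⟨rfl, hb⟩
    exact ⟨⟨hb.symm, hd⟩, rfl⟩

def Sym2.sum {V : Type*} [AddCommMagma V] : Sym2 V → V :=
  Sym2.lift ⟨(· + ·), add_comm⟩

@[simp]
lemma Sym2.sum_mk {V : Type*} [AddCommMagma V] (a b : V) : s(a, b).sum = a + b := rfl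

namespace ZModModule

variable {V : Type*} [AddCommGroup V] [Module (ZMod 2) V]

lemma add_eq_zero_iff_eq {a b : V} : a + b = 0 ↔ a = b := by
  rw [add_eq_zero_iff_eq_neg, neg_eq_self]

lemma add_eq_add_iff_add_eq_add {a b c d : V} : a + b = c + d ↔ a + c = b + d := by
  rw [← add_eq_zero_iff_eq, ← add_eq_zero_iff_eq (a := a + c), add_add_add_comm]

lemma intercalate_iff {i j x y : V} :
    (i ≠ j ∧ x ≠ y ∧ i + x = j + y ∧ i + y = j + x) ↔ i + j = x + y ∧ i + j ≠ 0 := by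
  rw [add_eq_add_iff_add_eq_add (a := i) (b := x), add_eq_add_iff_add_eq_add (a := i) (b := y),
    add_comm y x, ne_eq, ← add_eq_zero_iff_eq (a := i)]
  constructor
  · rintro ⟨hij, -, hsum, -⟩
    exact ⟨hsum, hij⟩
  · rintro ⟨hsum, hij⟩
    refine ⟨hij, fun hxy => hij ?_, hsum, hsum⟩
    rw [hsum, hxy, add_self]

lemma setOf_intercalate_eq :
    {pq : Sym2 V × Sym2 V | ∃ i j x y : V, pq.1 = s(i, j) ∧ pq.2 = s(x, y) ∧
        i ≠ j ∧ x ≠ y ∧ i + x = j + y ∧ i + y = j + x} =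
      {pq | pq.1.sum = pq.2.sum ∧ pq.1.sum ≠ 0} := by
  ext ⟨p, q⟩
  constructor
  · rintro ⟨i, j, x, y, rfl, rfl, h⟩
    exact intercalate_iff.1 h
  · induction p using Sym2.ind with | _ i j => ?_
    induction q using Sym2.ind with | _ x y => ?_
    intro h
    exact ⟨i, j, x, y, rfl, rfl, intercalate_iff.2 h⟩

variable [Fintype V] [DecidableEq V]

lemma two_mul_card_filter_sum_eq {d : V} (hd : d ≠ 0) :
    2 * #{p : Sym2 V | p.sum = d} = Fintype.card V := by
  have hmaps : ∀ i ∈ (univ : Finset V), s(i, i + d) ∈ ({p : Sym2 V | p.sum = d} : Finset _) := by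
    simp [← add_assoc, add_self]
  have hfiber : ∀ p ∈ ({p : Sym2 V | p.sum = d} : Finset _),
      #{i | s(i, i + d) = p} = 2 := by
    intro p hp
    induction p using Sym2.ind with | _ a b => ?_
    obtain rfl : a + b = d := by simpa using hp
    have hab : a ≠ b := fun h => hd (by rw [h, add_self])
    have hpreimage : ({i | s(i, i + (a + b)) = s(a, b)} : Finset V) = {a, b} := by
      ext i
      simp only [mem_filter, mem_univ, true_and, mem_insert, mem_singleton, Sym2.eq_iff]
      constructor
      · rintro (⟨rfl, -⟩ | ⟨rfl, -⟩) <;> simp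
      · rintro (rfl | rfl)
        · exact Or.inl ⟨rfl, by rw [← add_assoc, add_self, zero_add]⟩
        · exact Or.inr ⟨rfl, by rw [add_comm i, add_assoc, add_self, add_zero]⟩
    rw [hpreimage, card_pair hab]
  rw [← card_univ, card_eq_sum_card_fiberwise hmaps, sum_const_nat hfiber, mul_comm]

lemma four_mul_card_intercalates :
    4 * #{pq : Sym2 V × Sym2 V | pq.1.sum = pq.2.sum ∧ pq.1.sum ≠ 0} =
      (Fintype.card V - 1) * Fintype.card V ^ 2 := by
  have hfiber : ∀ d ∈ ({d | d ≠ 0} : Finset V),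
      4 * #{p : Sym2 V | p.sum = d} ^ 2 = Fintype.card V ^ 2 := fun d hd => by
    rw [← two_mul_card_filter_sum_eq (by simpa using hd)]
    ring
  rw [card_filter_fiberProduct Sym2.sum (· ≠ 0), mul_sum, sum_const_nat hfiber, filter_ne',
    card_erase_of_mem (mem_univ _), card_univ]

end ZModModule

/-- The multiplication table of `(ℤ/2ℤ)^k`, i.e. `L x y = x + y`, has exactly
`n²(n-1)/4` intercalates, where `n = 2^k`. An intercalate is an unordered pair
of distinct rows together with an unordered pair of distinct columns satisfying
`L i x = L j y` and `L i y = L j x`. -/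
theorem intercalates_of_elementary_abelian_two_group (k : ℕ) :
    Set.ncard {pq : Sym2 (Fin k → ZMod 2) × Sym2 (Fin k → ZMod 2) |
      ∃ i j x y : Fin k → ZMod 2, pq.1 = s(i, j) ∧ pq.2 = s(x, y) ∧
        i ≠ j ∧ x ≠ y ∧ i + x = j + y ∧ i + y = j + x}
      = (2 ^ k) ^ 2 * (2 ^ k - 1) / 4 := by
  have hcard : Fintype.card (Fin k → ZMod 2) = 2 ^ k := by simp
  rw [ZModModule.setOf_intercalate_eq, ← coe_filter_univ, Set.ncard_coe_finset, mul_comm,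
    ← hcard, ← ZModModule.four_mul_card_intercalates, Nat.mul_div_cancel_left _ four_pos]
end

section
/- Let Q be a quasigroup on a finite set X (a binary operation · such that left and right multiplications are bijections). Suppose Q satisfies the quadrangle condition: for all a,b,c,d,a',b',c' ∈ X, if a·c = a'·c', a·d = a'·d', and b·c = b'·c', then b·d = b'·d'. If Q additionally has an identity element, then Q is associative (hence a group). -/
/-- A quasigroup satisfying the quadrangle condition which possesses an
identity element is associative. -/
theorem quadrangle_condition_with_identity_implies_assoc
    {X : Type*} [Fintype X] (mul : X → X → X)
    (hleft : ∀ a, Function.Bijective (mul a))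
    (hright : ∀ a, Function.Bijective (fun x => mul x a))
    (hquad : ∀ a b c d a' b' c' d' : X,
      mul a c = mul a' c' → mul a d = mul a' d' → mul b c = mul b' c' →
      mul b d = mul b' d')
    (e : X) (he : ∀ x, mul e x = x ∧ mul x e = x) :
    ∀ x y z : X, mul (mul x y) z = mul x (mul y z) := by
  intro x y z
  exact hquad y (mul x y) e z e x y (mul y z)
    (by rw [(he y).2, (he y).1]) (by rw [(he (mul y z)).1]) (by rw [(he (mul x y)).2])
end
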